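/- Let X be a set and T an overlap-free subset of ⟨X⟩\{1}. Then an element u of ⟨X : i(T)⟩ is invertible (has a two-sided inverse) if and only if u lies in the submonoid of ⟨X : i(T)⟩ generated by the images of the elements of T together with the elements i(w) for w ∈ T. -/

import Mathlib

namespace AdjoinInverses

variable {X : Type*}

/-- The embedding of the free monoid on `X` into the free monoid on `X ⊕ S`. -/
def emb (S : Set (FreeMonoid X)) : FreeMonoid X →* FreeMonoid (X ⊕ S) :=
  FreeMonoid.map Sum.inl

/-- The generator `i(w)` corresponding to `w ∈ S`. -/
def igen (S : Set (FreeMonoid X)) (w : S) : FreeMonoid (X ⊕ S) :=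
  FreeMonoid.of (Sum.inr w)

/-- The defining relations `w ⬝ i(w) = 1` and `i(w) ⬝ w = 1` for `w ∈ S`. -/
inductive InvRel (S : Set (FreeMonoid X)) : FreeMonoid (X ⊕ S) → FreeMonoid (X ⊕ S) → Prop
  | mul_inv (w : S) : InvRel S (emb S w.1 * igen S w) 1
  | inv_mul (w : S) : InvRel S (igen S w * emb S w.1) 1

/-- The congruence generated by the defining relations. -/
def invCon (S : Set (FreeMonoid X)) : Con (FreeMonoid (X ⊕ S)) := conGen (InvRel S)

/-- The monoid `⟨X : i(S)⟩` obtained from the free monoid on `X` by universally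
adjoining a two-sided inverse to each element of `S`. -/
def AdjInv (S : Set (FreeMonoid X)) : Type _ := (invCon S).Quotient

instance (S : Set (FreeMonoid X)) : Monoid (AdjInv S) := Con.monoid _

/-- The natural homomorphism `⟨X⟩ → ⟨X : i(S)⟩`. -/
def natHom (S : Set (FreeMonoid X)) : FreeMonoid X →* AdjInv S :=
  ((invCon S).mk').comp (emb S)

/-- The adjoined inverse `i(w)`, as an element of `⟨X : i(S)⟩`. -/
def invElt (S : Set (FreeMonoid X)) (w : S) : AdjInv S :=
  (invCon S).mk' (igen S w)

/-- `S` and `S'` are inverse-equivalent: each element of `S'` becomes invertible in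
`⟨X : i(S)⟩` and each element of `S` becomes invertible in `⟨X : i(S')⟩`. -/
def InvEquiv (S S' : Set (FreeMonoid X)) : Prop :=
  (∀ w ∈ S', IsUnit (natHom S w)) ∧ ∀ w ∈ S, IsUnit (natHom S' w)

/-- Two (nonidentity) elements of the free monoid overlap: one can be written `a*b`
and the other `b*c` with `b ≠ 1` and at most one of `a`, `c` equal to `1`. -/
def Overlap (u v : FreeMonoid X) : Prop :=
  ∃ a b c : FreeMonoid X, b ≠ 1 ∧ (a ≠ 1 ∨ c ≠ 1) ∧ u = a * b ∧ v = b * c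

/-- A set `T` is overlap-free if no pair of elements of `T` (distinct or not) overlap. -/
def OverlapFree (T : Set (FreeMonoid X)) : Prop :=
  ∀ u ∈ T, ∀ v ∈ T, ¬ Overlap u v

/-!
Orient the defining relations as the rewriting rules `w i(w) → 1` and `i(w) w → 1`. Push the
letters of a word one at a time onto a reduced word, cancelling the redex, if any, that appears at
the end. Because `T` is overlap-free, pushing `w i(w)` or `i(w) w` leaves every reduced word
unchanged, so this is an action of `⟨X : i(T)⟩` on reduced words, and every element is represented
by a unique reduced word.

Let the reduced word `a` represent a unit `u`, and the reduced word `b` represent `u⁻¹`. Then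
`a b` represents `1` but is not empty, so it is not reduced, and some redex straddles `a` and `b`.
Either `a` ends in a whole `w` or in `i(w)`; we strip that generator off and induct on the length
of `a`. Or the cut falls inside `w = w₁ w₂`, so `a` ends in `w₁` and `u · (w₂ i(w) w₁) = u`. Then
the nonempty reduced word `w₂ i(w) w₁` would represent `1`, which is impossible.
-/

open Sum

variable {T : Set (FreeMonoid X)}

lemma eq_of_append_cons_eq {α : Type*} {p q p' q' : List α} {a a' : α}
    (h : p ++ a :: q = p' ++ a' :: q') (ha : a ∉ q') (ha' : a' ∉ q) : p = p' ∧ a = a' ∧ q = q' := by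
  simp only [List.append_eq_append_iff, List.cons_eq_append_iff, List.cons.injEq] at h
  rcases h with ⟨c, rfl, ⟨rfl, rfl, rfl⟩ | ⟨d, rfl, rfl⟩⟩ |
    ⟨c, rfl, ⟨rfl, rfl, rfl⟩ | ⟨d, rfl, rfl⟩⟩ <;> simp_all

def IsRedex (r : List (X ⊕ T)) : Prop :=
  ∃ w : T, r = w.1.toList.map inl ++ [inr w] ∨ r = inr w :: w.1.toList.map inl

def IsReduced (s : List (X ⊕ T)) : Prop :=
  ∀ r, IsRedex r → ¬ r <:+: s

lemma isRedex_mulInv (w : T) : IsRedex (w.1.toList.map inl ++ [inr w]) := ⟨w, .inl rfl⟩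

lemma isRedex_invMul (w : T) : IsRedex (inr w :: w.1.toList.map inl) := ⟨w, .inr rfl⟩

lemma IsRedex.ne_nil {r : List (X ⊕ T)} (hr : IsRedex r) : r ≠ [] := by
  obtain ⟨w, rfl | rfl⟩ := hr <;> simp

lemma isReduced_nil : IsReduced ([] : List (X ⊕ T)) := by
  rintro r ⟨w, rfl | rfl⟩ h <;> simp [List.infix_nil] at h

lemma IsReduced.of_infix {s t : List (X ⊕ T)} (hs : IsReduced s) (h : t <:+: s) : IsReduced t :=
  fun r hr hrt => hs r hr (hrt.trans h)

lemma eq_of_append_mulInv_eq_append_invMul {p p' : List (X ⊕ T)} {v w : T}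
    (h : p ++ (v.1.toList.map inl ++ [inr v]) = p' ++ inr w :: w.1.toList.map inl) :
    p = p' := by
  rcases List.eq_nil_or_concat w.1.toList with hw | ⟨l, x, hw⟩ <;> rw [hw] at h
  · simp only [← List.append_assoc, List.map_nil, List.append_singleton_inj, inr.injEq] at h
    obtain ⟨rfl, rfl⟩ := h
    simp [hw]
  · simpa using congrArg List.reverse h

lemma IsRedex.eq_of_append_eq_append {r p p' r' : List (X ⊕ T)} (hr : IsRedex r) (hr' : IsRedex r')
    (h : p ++ r = p' ++ r') : p = p' := by
  obtain ⟨v, rfl | rfl⟩ := hr <;> obtain ⟨w, rfl | rfl⟩ := hr'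
  · simp only [← List.append_assoc] at h
    obtain ⟨h, hvw⟩ := List.append_inj' h rfl
    obtain rfl : v = w := by simpa using hvw
    exact List.append_cancel_right h
  · exact eq_of_append_mulInv_eq_append_invMul h
  · exact (eq_of_append_mulInv_eq_append_invMul h.symm).symm
  · exact (eq_of_append_cons_eq h (by simp) (by simp)).1

open Classical in
noncomputable def push (t : List (X ⊕ T)) (a : X ⊕ T) : List (X ⊕ T) :=
  if h : ∃ p r, IsRedex r ∧ t ++ [a] = p ++ r then h.choose else t ++ [a]

noncomputable def pushList (t l : List (X ⊕ T)) : List (X ⊕ T) := l.foldl push t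

@[simp] lemma pushList_nil (t : List (X ⊕ T)) : pushList t [] = t := rfl

@[simp] lemma pushList_cons (t : List (X ⊕ T)) (a : X ⊕ T) (l : List (X ⊕ T)) :
    pushList t (a :: l) = pushList (push t a) l := rfl

lemma pushList_append (t l l' : List (X ⊕ T)) :
    pushList t (l ++ l') = pushList (pushList t l) l' := List.foldl_append

lemma push_of_eq {t p r : List (X ⊕ T)} {a : X ⊕ T} (hr : IsRedex r) (h : t ++ [a] = p ++ r) :
    push t a = p := by
  have hex : ∃ p r, IsRedex r ∧ t ++ [a] = p ++ r := ⟨p, r, hr, h⟩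
  obtain ⟨r', hr', h'⟩ := hex.choose_spec
  rw [push, dif_pos hex]
  exact hr'.eq_of_append_eq_append hr (h'.symm.trans h)

lemma push_of_forall {t : List (X ⊕ T)} {a : X ⊕ T}
    (h : ∀ p r, IsRedex r → t ++ [a] ≠ p ++ r) : push t a = t ++ [a] := by
  rw [push, dif_neg (by simpa using h)]

lemma IsReduced.push {t : List (X ⊕ T)} (ht : IsReduced t) (a : X ⊕ T) : IsReduced (push t a) := by
  by_cases hpop : ∃ p r, IsRedex r ∧ t ++ [a] = p ++ r
  · obtain ⟨p, r, hr, h⟩ := hpop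
    rw [push_of_eq hr h]
    refine ht.of_infix (List.IsPrefix.isInfix ?_)
    rcases List.prefix_concat_iff.1 ⟨r, h.symm⟩ with rfl | hp
    · exact absurd (by simpa using h) hr.ne_nil
    · exact hp
  · push Not at hpop
    rw [push_of_forall hpop]
    intro r hr hinf
    rcases List.infix_concat_iff.1 hinf with ⟨p, hp⟩ | hinf
    · exact hpop p r hr hp.symm
    · exact ht r hr hinf

lemma IsReduced.pushList {t : List (X ⊕ T)} (ht : IsReduced t) (l : List (X ⊕ T)) :
    IsReduced (pushList t l) := by
  induction l generalizing t with
  | nil => exact ht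
  | cons a l ih => exact ih (ht.push a)

lemma pushList_of_isReduced {t l : List (X ⊕ T)} (h : IsReduced (t ++ l)) :
    pushList t l = t ++ l := by
  induction l generalizing t with
  | nil => simp
  | cons a l ih =>
    have hpush : push t a = t ++ [a] := push_of_forall fun p r hr hp =>
      h r hr ⟨p, l, by simp [← hp]⟩
    rw [pushList_cons, hpush, ih (by simpa using h)]
    simp

lemma OverlapFree.eq_nil_of_eq_append (hT : OverlapFree T) {v w : T} {v₁ b w₂ : List X}
    (hv : v.1.toList = v₁ ++ b) (hw : w.1.toList = b ++ w₂) (hb : b ≠ []) :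
    v₁ = [] ∧ w₂ = [] := by
  by_contra hne
  refine hT v.1 v.2 w.1 w.2 ⟨.ofList v₁, .ofList b, .ofList w₂, ?_, ?_, ?_, ?_⟩
  · rwa [Ne, ← FreeMonoid.ofList_nil, EmbeddingLike.apply_eq_iff_eq]
  · simpa only [Ne, ← FreeMonoid.ofList_nil, EmbeddingLike.apply_eq_iff_eq, ← not_and_or] using hne
  · rw [← FreeMonoid.ofList_append, ← hv, FreeMonoid.ofList_toList]
  · rw [← FreeMonoid.ofList_append, ← hw, FreeMonoid.ofList_toList]

lemma IsRedex.eq_of_append_inr {t p r : List (X ⊕ T)} {w : T} (hr : IsRedex r)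
    (h : t ++ [inr w] = p ++ r) : t = p ++ w.1.toList.map inl := by
  obtain ⟨v, rfl | rfl⟩ := hr
  · simp only [← List.append_assoc] at h
    obtain ⟨h, hvw⟩ := List.append_inj' h rfl
    obtain rfl : w = v := by simpa using hvw
    exact h
  · rcases List.eq_nil_or_concat v.1.toList with hv | ⟨l, x, hv⟩ <;> rw [hv] at h
    · obtain ⟨rfl, rfl⟩ : t = p ∧ w = v := by simpa using h
      simp [hv]
    · simpa using congrArg List.reverse h

-- Overlap-freeness enters here: a redex `i(v) v` completed by a letter of `w` is `i(w) w` itself.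
lemma IsRedex.eq_of_append_map_inl (hT : OverlapFree T) {t p r : List (X ⊕ T)} {w : T}
    {w₁ w₂ : List X} {x : X} (hw : w.1.toList = w₁ ++ x :: w₂) (hr : IsRedex r)
    (h : t ++ (w₁ ++ [x]).map inl = p ++ r) : w₂ = [] ∧ t = p ++ [inr w] := by
  obtain ⟨v, rfl | rfl⟩ := hr
  · simpa using congrArg List.reverse h
  · replace h : t ++ (w₁ ++ [x]).map inl = (p ++ [inr v]) ++ v.1.toList.map inl := by simpa using h
    rw [List.append_eq_append_iff] at h
    have key : ∀ {v₁}, v.1.toList = v₁ ++ (w₁ ++ [x]) → v₁ = [] ∧ w₂ = [] ∧ v = w := by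
      intro v₁ hv
      obtain ⟨rfl, rfl⟩ := hT.eq_nil_of_eq_append hv (by simpa using hw) (by simp)
      exact ⟨rfl, rfl, Subtype.ext (FreeMonoid.toList.injective (hv.trans hw.symm))⟩
    rcases h with ⟨as, h₁, h₂⟩ | ⟨bs, rfl, h₂⟩
    · obtain ⟨l₁, l₂, hl, rfl, hl₂⟩ := List.map_eq_append_iff.1 h₂
      rcases List.eq_nil_or_concat l₁ with rfl | ⟨l, y, rfl⟩
      · have hv : v.1.toList = [] ++ (w₁ ++ [x]) := by
          simpa [hl] using (List.map_injective_iff.2 inl_injective hl₂).symm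
        obtain ⟨-, rfl, rfl⟩ := key hv
        simpa using h₁.symm
      · simpa using congrArg List.reverse h₁
    · obtain ⟨v₁, l₂, hv, rfl, hl₂⟩ := List.map_eq_append_iff.1 h₂
      obtain ⟨rfl, rfl, rfl⟩ := key (hv.trans (by rw [List.map_injective_iff.2 inl_injective hl₂]))
      simp

lemma pushList_map_inl (hT : OverlapFree T) {t : List (X ⊕ T)} {w : T} {w₁ w₂ : List X}
    (hw : w.1.toList = w₁ ++ w₂) (ht : ¬ ∃ t₀, t = t₀ ++ [inr w]) :
    pushList (t ++ w₁.map inl) (w₂.map inl) = t ++ (w₁ ++ w₂).map inl := by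
  induction w₂ generalizing w₁ with
  | nil => simp
  | cons x w₂ ih =>
    have hpush : push (t ++ w₁.map inl) (inl x) = t ++ (w₁ ++ [x]).map inl := by
      refine (push_of_forall fun p r hr h => ht ⟨p, ?_⟩).trans (by simp)
      exact (hr.eq_of_append_map_inl hT hw (by simpa using h)).2
    rw [List.map_cons, pushList_cons, hpush, ih (by simpa using hw)]
    simp

lemma pushList_inr_map_inl (hT : OverlapFree T) {t : List (X ⊕ T)} {w : T} {w₁ w₂ : List X}
    (hw : w.1.toList = w₁ ++ w₂) (hw₂ : w₂ ≠ []) :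
    pushList (t ++ inr w :: w₁.map inl) (w₂.map inl) = t := by
  induction w₂ generalizing w₁ with
  | nil => exact absurd rfl hw₂
  | cons x w₂ ih =>
    rw [List.map_cons, pushList_cons]
    rcases eq_or_ne w₂ [] with rfl | hne
    · rw [push_of_eq (p := t) (isRedex_invMul w) (by simp [hw]), List.map_nil, pushList_nil]
    · have hpush : push (t ++ inr w :: w₁.map inl) (inl x) = t ++ inr w :: (w₁ ++ [x]).map inl := by
        refine (push_of_forall fun p r hr h => hne ?_).trans (by simp)
        exact (hr.eq_of_append_map_inl hT (t := t ++ [inr w]) hw (by simpa using h)).1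
      rw [hpush, ih (by simpa using hw) hne]

lemma pushList_mulInv (hT : OverlapFree T) {t : List (X ⊕ T)} (ht : IsReduced t) (w : T) :
    pushList t (w.1.toList.map inl ++ [inr w]) = t := by
  rw [pushList_append]
  by_cases hend : ∃ t₀, t = t₀ ++ [inr w]
  · obtain ⟨t₀, rfl⟩ := hend
    have hw : w.1.toList ≠ [] := fun hw => ht _ (isRedex_mulInv w) ⟨t₀, [], by simp [hw]⟩
    have h := pushList_inr_map_inl hT (t := t₀) (w₁ := []) (List.nil_append _).symm hw
    rw [List.map_nil] at h
    rw [h, pushList_cons, pushList_nil]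
    refine push_of_forall fun p r hr h => ?_
    rw [hr.eq_of_append_inr h] at ht
    exact ht _ (isRedex_mulInv w) ⟨p, [], by simp⟩
  · have h := pushList_map_inl hT (List.nil_append _).symm hend
    rw [List.map_nil, List.append_nil, List.nil_append] at h
    rw [h, pushList_cons, pushList_nil, push_of_eq (isRedex_mulInv w) (List.append_assoc _ _ _)]

lemma pushList_invMul (hT : OverlapFree T) {t : List (X ⊕ T)} (ht : IsReduced t) (w : T) :
    pushList t (inr w :: w.1.toList.map inl) = t := by
  rw [pushList_cons]
  by_cases hend : ∃ p, t = p ++ w.1.toList.map inl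
  · obtain ⟨p, rfl⟩ := hend
    rw [push_of_eq (isRedex_mulInv w) (List.append_assoc _ _ _)]
    have hp : ¬ ∃ p₀, p = p₀ ++ [inr w] := by
      rintro ⟨p₀, rfl⟩
      exact ht _ (isRedex_invMul w) ⟨p₀, [], by simp⟩
    simpa using pushList_map_inl hT (List.nil_append _).symm hp
  · have hw : w.1.toList ≠ [] := fun hw => hend ⟨t, by simp [hw]⟩
    rw [push_of_forall fun p r hr h => hend ⟨p, hr.eq_of_append_inr h⟩]
    simpa using pushList_inr_map_inl hT (t := t) (List.nil_append _).symm hw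

def ofWord (l : List (X ⊕ T)) : AdjInv T := (invCon T).mk' (FreeMonoid.ofList l)

lemma ofWord_append (l l' : List (X ⊕ T)) : ofWord (l ++ l') = ofWord l * ofWord l' := by
  rw [ofWord, FreeMonoid.ofList_append, map_mul]
  rfl

@[simp] lemma ofWord_nil : ofWord ([] : List (X ⊕ T)) = 1 := map_one _

lemma ofWord_map_inl (l : List X) : ofWord (l.map inl : List (X ⊕ T)) = natHom T (.ofList l) :=
  rfl

lemma IsRedex.ofWord_eq_one {r : List (X ⊕ T)} (hr : IsRedex r) : ofWord r = 1 := by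
  refine (Con.eq _).2 (ConGen.Rel.of _ _ ?_)
  obtain ⟨w, rfl | rfl⟩ := hr
  · exact InvRel.mul_inv w
  · exact InvRel.inv_mul w

lemma natHom_mul_invElt (w : T) : natHom T w * invElt T w = 1 :=
  (isRedex_mulInv w).ofWord_eq_one

lemma invElt_mul_natHom (w : T) : invElt T w * natHom T w = 1 :=
  (isRedex_invMul w).ofWord_eq_one

lemma ofWord_push (t : List (X ⊕ T)) (a : X ⊕ T) : ofWord (push t a) = ofWord (t ++ [a]) := by
  by_cases hpop : ∃ p r, IsRedex r ∧ t ++ [a] = p ++ r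
  · obtain ⟨p, r, hr, h⟩ := hpop
    rw [push_of_eq hr h, h, ofWord_append, hr.ofWord_eq_one, mul_one]
  · push Not at hpop
    rw [push_of_forall hpop]

lemma ofWord_pushList (t l : List (X ⊕ T)) : ofWord (pushList t l) = ofWord (t ++ l) := by
  induction l generalizing t with
  | nil => simp
  | cons a l ih => rw [pushList_cons, ih, ofWord_append, ofWord_push, ← ofWord_append]; simp

lemma pushList_eq_of_invCon (hT : OverlapFree T) {x y : FreeMonoid (X ⊕ T)} (h : invCon T x y)
    {t : List (X ⊕ T)} (ht : IsReduced t) : pushList t x.toList = pushList t y.toList := by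
  induction h generalizing t with
  | of x y h =>
    cases h with
    | mul_inv w => exact pushList_mulInv hT ht w
    | inv_mul w => exact pushList_invMul hT ht w
  | refl => rfl
  | symm _ ih => exact (ih ht).symm
  | trans _ _ ih₁ ih₂ => exact (ih₁ ht).trans (ih₂ ht)
  | mul _ _ ih₁ ih₂ =>
    rw [FreeMonoid.toList_mul, FreeMonoid.toList_mul, pushList_append, pushList_append, ih₁ ht,
      ih₂ ((ih₁ ht) ▸ ht.pushList _)]

lemma exists_isReduced_ofWord_eq (u : AdjInv T) :
    ∃ a : List (X ⊕ T), IsReduced a ∧ ofWord a = u := by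
  obtain ⟨x, rfl⟩ := Con.mk'_surjective u
  refine ⟨pushList [] x.toList, isReduced_nil.pushList _, ?_⟩
  rw [ofWord_pushList, List.nil_append, ofWord, FreeMonoid.ofList_toList]

lemma IsReduced.eq_of_ofWord_eq (hT : OverlapFree T) {a b : List (X ⊕ T)} (ha : IsReduced a)
    (hb : IsReduced b) (h : ofWord a = ofWord b) : a = b := by
  have := pushList_eq_of_invCon hT ((Con.eq _).1 h) isReduced_nil
  simpa [pushList_of_isReduced, ha, hb] using this

lemma isReduced_map_inl_append_inr_append {w : T} {l₁ l₂ : List X}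
    (h₁ : l₁.length < w.1.toList.length) (h₂ : l₂.length < w.1.toList.length) :
    IsReduced (l₁.map inl ++ inr w :: l₂.map inl) := by
  rintro r ⟨v, rfl | rfl⟩ ⟨p, q, h⟩
  · rw [List.append_assoc, List.append_assoc, List.singleton_append, ← List.append_assoc] at h
    obtain ⟨hp, hvw, -⟩ := (List.append_cons_inj_of_notMem (by simp) (by simp)).1 h.symm
    obtain rfl := inr_injective hvw
    have := congrArg List.length hp
    simp only [List.length_map, List.length_append] at this
    omega
  · rw [List.append_assoc, List.cons_append] at h
    obtain ⟨-, hvw, hq⟩ := (List.append_cons_inj_of_notMem (by simp) (by simp)).1 h.symm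
    obtain rfl := inr_injective hvw
    have := congrArg List.length hq
    simp only [List.length_map, List.length_append] at this
    omega

lemma ofWord_map_inl_append_inr_append_ne_one (hT : OverlapFree T) {w : T} {w₁ w₂ : List X}
    (hw : w.1.toList = w₁ ++ w₂) (h₁ : w₁ ≠ []) (h₂ : w₂ ≠ []) :
    ofWord (w₂.map inl ++ inr w :: w₁.map inl) ≠ 1 := by
  have hred : IsReduced (w₂.map inl ++ inr w :: w₁.map inl) :=
    isReduced_map_inl_append_inr_append (by simp [hw, List.length_pos_iff.2 h₁])
      (by simp [hw, List.length_pos_iff.2 h₂])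
  intro h
  simpa using hred.eq_of_ofWord_eq hT isReduced_nil (h.trans ofWord_nil.symm)

lemma exists_suffix_prefix_of_infix_append {α : Type*} {l a b : List α} (h : l <:+: a ++ b)
    (ha : ¬ l <:+: a) (hb : ¬ l <:+: b) :
    ∃ l₁ l₂, l = l₁ ++ l₂ ∧ l₁ ≠ [] ∧ l₂ ≠ [] ∧ l₁ <:+ a ∧ l₂ <+: b := by
  obtain ⟨p, q, h⟩ := h
  rcases List.append_eq_append_iff.1 h with ⟨s, rfl, rfl⟩ | ⟨s, hs, rfl⟩
  · exact absurd ⟨p, s, rfl⟩ ha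
  rcases List.append_eq_append_iff.1 hs with ⟨s', rfl, rfl⟩ | ⟨s', rfl, rfl⟩
  · refine ⟨s', s, rfl, ?_, ?_, List.suffix_append _ _, List.prefix_append _ _⟩
    · rintro rfl
      exact hb ⟨[], q, by simp⟩
    · rintro rfl
      exact ha ⟨p, [], by simp⟩
  · exact absurd ⟨s', q, rfl⟩ hb

lemma IsRedex.cases_of_append {r₁ r₂ : List (X ⊕ T)} (hr : IsRedex (r₁ ++ r₂)) (h₁ : r₁ ≠ [])
    (h₂ : r₂ ≠ []) :
    ∃ w : T, r₁ = w.1.toList.map inl ∨ r₁ = [inr w] ∨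
      ∃ c w₁ w₂, w.1.toList = w₁ ++ w₂ ∧ w₁ ≠ [] ∧ w₂ ≠ [] ∧ r₁ = c ++ w₁.map inl := by
  obtain ⟨w, h | h⟩ := hr <;> refine ⟨w, ?_⟩
  · rcases List.append_eq_append_iff.1 h with ⟨s, hs, rfl⟩ | ⟨s, rfl, hs⟩
    · obtain ⟨w₁, w₂, hw, rfl, rfl⟩ := List.map_eq_append_iff.1 hs
      rcases eq_or_ne w₂ [] with rfl | hw₂
      · exact .inl (by simp [hw])
      · exact .inr (.inr ⟨[], w₁, w₂, hw, by simpa using h₁, hw₂, rfl⟩)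
    · obtain ⟨rfl, -⟩ : s = [] ∧ r₂ = [inr w] := by
        simpa [h₂] using List.singleton_eq_append_iff.1 hs
      exact .inl (by simp)
  · rcases List.append_eq_cons_iff.1 h with ⟨rfl, -⟩ | ⟨s, rfl, hs⟩
    · exact absurd rfl h₁
    obtain ⟨w₁, w₂, hw, rfl, rfl⟩ := List.map_eq_append_iff.1 hs
    rcases eq_or_ne w₁ [] with rfl | hw₁
    · exact .inr (.inl rfl)
    · exact .inr (.inr ⟨[inr w], w₁, w₂, hw, hw₁, by simpa using h₂, rfl⟩)

def generators (T : Set (FreeMonoid X)) : Set (AdjInv T) := natHom T '' T ∪ Set.range (invElt T)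

lemma generators_subset_isUnit : generators T ⊆ IsUnit.submonoid (AdjInv T) := by
  rintro _ (⟨w, hw, rfl⟩ | ⟨w, rfl⟩)
  · exact ⟨⟨_, _, natHom_mul_invElt ⟨w, hw⟩, invElt_mul_natHom ⟨w, hw⟩⟩, rfl⟩
  · exact ⟨⟨_, _, invElt_mul_natHom w, natHom_mul_invElt w⟩, rfl⟩

lemma ofWord_mem_closure_of_isUnit (hT : OverlapFree T) {a : List (X ⊕ T)} (ha : IsReduced a)
    (hu : IsUnit (ofWord a)) : ofWord a ∈ Submonoid.closure (generators T) := by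
  induction hn : a.length using Nat.strong_induction_on generalizing a with
  | _ n ih =>
    rcases eq_or_ne a [] with rfl | hne
    · exact ofWord_nil ▸ one_mem _
    obtain ⟨b, hb, hab⟩ := exists_isReduced_ofWord_eq (↑hu.unit⁻¹ : AdjInv T)
    have hab_one : ofWord (a ++ b) = ofWord [] := by
      rw [ofWord_append, hab, IsUnit.mul_val_inv, ofWord_nil]
    have hnot : ¬ IsReduced (a ++ b) := fun h =>
      hne (List.append_eq_nil_iff.1 (h.eq_of_ofWord_eq hT isReduced_nil hab_one)).1
    simp only [IsReduced, not_forall, not_not] at hnot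
    obtain ⟨r, hr, hinf⟩ := hnot
    obtain ⟨r₁, r₂, rfl, hr₁, hr₂, ⟨c, rfl⟩, -⟩ :=
      exists_suffix_prefix_of_infix_append hinf (ha r hr) (hb r hr)
    have mem_of_generator (hg : ofWord r₁ ∈ generators T) :
        ofWord (c ++ r₁) ∈ Submonoid.closure (generators T) := by
      have hc : IsUnit (ofWord c) :=
        (generators_subset_isUnit hg).mul_right_iff.1 (ofWord_append c r₁ ▸ hu)
      have hlt : c.length < n := by simpa [← hn] using List.length_pos_iff.2 hr₁
      rw [ofWord_append]
      exact mul_mem (ih _ hlt (ha.of_infix List.infix_append_left) hc rfl)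
        (Submonoid.subset_closure hg)
    obtain ⟨w, rfl | rfl | ⟨c', w₁, w₂, hw, hw₁, hw₂, rfl⟩⟩ := hr.cases_of_append hr₁ hr₂
    · exact mem_of_generator (.inl ⟨w, w.2, by rw [ofWord_map_inl, FreeMonoid.ofList_toList]⟩)
    · exact mem_of_generator (.inr ⟨w, rfl⟩)
    · refine absurd (hu.mul_left_cancel ?_) (ofWord_map_inl_append_inr_append_ne_one hT hw hw₁ hw₂)
      have hsplit : c ++ (c' ++ w₁.map inl) ++ (w₂.map inl ++ inr w :: w₁.map inl) =
          (c ++ c') ++ (w.1.toList.map inl ++ [inr w]) ++ w₁.map inl := by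
        simp [hw]
      rw [mul_one, ← ofWord_append, hsplit, ofWord_append, ofWord_append,
        (isRedex_mulInv w).ofWord_eq_one, mul_one, ← ofWord_append, List.append_assoc]

theorem stmt7_general (X : Type*) (T : Set (FreeMonoid X))
    (hT : OverlapFree T) (u : AdjInv T) :
    IsUnit u ↔ u ∈ Submonoid.closure (natHom T '' T ∪ Set.range (invElt T)) := by
  refine ⟨fun hu => ?_, fun hu => Submonoid.closure_le.2 generators_subset_isUnit hu⟩
  obtain ⟨a, ha, rfl⟩ := exists_isReduced_ofWord_eq u
  exact ofWord_mem_closure_of_isUnit hT ha hu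

/-- an element of `⟨X : i(T)⟩` is invertible iff it lies in the submonoid
generated by the images of elements of `T` together with the elements `i(w)`, `w ∈ T`. -/
theorem stmt7 (X : Type*) (T : Set (FreeMonoid X))
    (h1 : (1 : FreeMonoid X) ∉ T) (hT : OverlapFree T) (u : AdjInv T) :
    IsUnit u ↔ u ∈ Submonoid.closure (natHom T '' T ∪ Set.range (invElt T)) :=
  stmt7_general X T hT u

end AdjoinInverses
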